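/- (Discrete Schauder estimate, gain of regularity) Let 0 < α, β < 1 with α + β < 1, h > 0, and let u : ℤ_h → ℝ satisfy ∑_{m=0}^∞ |u((m±n)h)|/(1+m)^{1-α} < ∞ for all n ∈ ℤ, and suppose [u]_{C_h^{0,β}} := sup_{m≠j} |u(jh) − u(mh)|/(h^β |j−m|^β) < ∞ and sup_m |u(mh)| < ∞. Then (δ_right)^{-α} u(nh) := h^α ∑_{m=n}^∞ Λ^{-α}(m−n) u(mh) satisfies [(δ_right)^{-α} u]_{C_h^{0,β+α}} ≤ C ‖u‖_{C_h^{0,β}} with C independent of h and u. -/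

import Mathlib

open scoped BigOperators

/-- `Lam α m` is the kernel `Λ^{-α}(m) = α(α+1)⋯(α+m-1)/m!`, with `Lam α 0 = 1`. -/
noncomputable def Lam (α : ℝ) (m : ℕ) : ℝ :=
  (∏ i ∈ Finset.range m, (α + i)) / (Nat.factorial m)

/-!
Write `n = l + k` with `k > 0`. The kernel `Λ = Λ^{-α}` is decreasing to `0`, so
`∑_j (Λ j - Λ (j + k)) = ∑_{j<k} Λ j`, and subtracting `u n` from every value turns
`∑_j Λ j u (n + j) - ∑_j Λ j u (l + j)` into
`∑_j (Λ j - Λ (j + k)) (u (n + j) - u n) - ∑_{j<k} Λ j (u (l + j) - u n)`,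
where only Hölder increments of `u` occur. Since `Λ j ≤ (j + 1)^{α-1}` and
`Λ j - Λ (j + k) ≤ k (j + 1)^{α-2}`, the finite sum and the terms `j < k` of the series are
`O(k^{α+β})` by `∑_{j<k} (j + 1)^{γ-1} ≤ k^γ / γ` (`0 < γ ≤ 1`), and the terms `j ≥ k` are
`k · O(k^{α+β-1})` because `α + β < 1`. The factor `h^α` and the `h^β` of the Hölder
constant give the power `h^{α+β}`.
-/

open Finset Filter Topology

section Kernel

variable {α : ℝ}

lemma Lam_eq_prod (α : ℝ) (m : ℕ) : Lam α m = ∏ i ∈ range m, (α + i) / (i + 1) := by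
  rw [Lam, prod_div_distrib, ← prod_range_add_one_eq_factorial]
  push_cast
  rfl

lemma Lam_nonneg (hα : 0 ≤ α) (m : ℕ) : 0 ≤ Lam α m := by
  rw [Lam_eq_prod]
  positivity

lemma Lam_sub_Lam_succ (α : ℝ) (m : ℕ) :
    Lam α m - Lam α (m + 1) = (1 - α) / (m + 1) * Lam α m := by
  rw [Lam_eq_prod, Lam_eq_prod, prod_range_succ]
  field_simp
  ring

lemma Lam_antitone (hα0 : 0 ≤ α) (hα1 : α ≤ 1) : Antitone (Lam α) := by
  refine antitone_nat_of_succ_le fun m => sub_nonneg.1 ?_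
  rw [Lam_sub_Lam_succ]
  exact mul_nonneg (div_nonneg (by linarith) (by positivity)) (Lam_nonneg hα0 m)

lemma Lam_le_rpow (hα0 : 0 ≤ α) (hα1 : α ≤ 1) (m : ℕ) :
    Lam α m ≤ ((m : ℝ) + 1) ^ (α - 1) := by
  have hfactor :
      ∀ i ∈ range m, (α + i) / (i + 1) ≤ Real.exp (-((1 - α) * ((i : ℝ) + 1)⁻¹)) := by
    intro i _
    have := Real.add_one_le_exp (-((1 - α) * ((i : ℝ) + 1)⁻¹))
    calc (α + i) / (i + 1) = -((1 - α) * ((i : ℝ) + 1)⁻¹) + 1 := by field_simp; ring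
      _ ≤ _ := this
  have hharmonic : Real.log ((m : ℝ) + 1) ≤ ∑ i ∈ range m, ((i : ℝ) + 1)⁻¹ := by
    simpa [harmonic] using log_add_one_le_harmonic m
  calc Lam α m ≤ ∏ i ∈ range m, Real.exp (-((1 - α) * ((i : ℝ) + 1)⁻¹)) := by
        rw [Lam_eq_prod]
        exact prod_le_prod (fun i _ => by positivity) hfactor
    _ = Real.exp (-((1 - α) * ∑ i ∈ range m, ((i : ℝ) + 1)⁻¹)) := by
        rw [← Real.exp_sum, mul_sum, ← sum_neg_distrib]
    _ ≤ Real.exp (-((1 - α) * Real.log ((m : ℝ) + 1))) := by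
        gcongr
    _ = ((m : ℝ) + 1) ^ (α - 1) := by
        rw [Real.rpow_def_of_pos (by positivity)]
        ring_nf

lemma Lam_sub_Lam_succ_le (hα0 : 0 ≤ α) (hα1 : α ≤ 1) (m : ℕ) :
    Lam α m - Lam α (m + 1) ≤ ((m : ℝ) + 1) ^ (α - 2) := by
  have hm : (0 : ℝ) < m + 1 := by positivity
  rw [Lam_sub_Lam_succ, show α - 2 = (α - 1) - 1 by ring, Real.rpow_sub_one hm.ne',
    div_mul_eq_mul_div, div_le_div_iff_of_pos_right hm]
  calc (1 - α) * Lam α m ≤ 1 * ((m : ℝ) + 1) ^ (α - 1) :=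
        mul_le_mul (by linarith) (Lam_le_rpow hα0 hα1 m) (Lam_nonneg hα0 m) zero_le_one
    _ = _ := one_mul _

lemma Lam_sub_Lam_add_le (hα0 : 0 ≤ α) (hα1 : α ≤ 1) (m k : ℕ) :
    Lam α m - Lam α (m + k) ≤ k * ((m : ℝ) + 1) ^ (α - 2) := by
  have htelescope := sum_range_sub' (fun i => Lam α (m + i)) k
  simp only [add_zero] at htelescope
  calc Lam α m - Lam α (m + k) = ∑ i ∈ range k, (Lam α (m + i) - Lam α (m + i + 1)) :=
        htelescope.symm
    _ ≤ ∑ _i ∈ range k, ((m : ℝ) + 1) ^ (α - 2) := by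
        refine sum_le_sum fun i _ => (Lam_sub_Lam_succ_le hα0 hα1 (m + i)).trans ?_
        exact Real.rpow_le_rpow_of_nonpos (by positivity) (by push_cast; linarith) (by linarith)
    _ = k * ((m : ℝ) + 1) ^ (α - 2) := by simp

lemma tendsto_Lam_atTop (hα0 : 0 ≤ α) (hα1 : α < 1) : Tendsto (Lam α) atTop (𝓝 0) := by
  have hpow : Tendsto (fun m : ℕ => ((m : ℝ) + 1) ^ (α - 1)) atTop (𝓝 0) := by
    have := (tendsto_rpow_neg_atTop (by linarith : 0 < 1 - α)).comp
      (tendsto_natCast_atTop_atTop.atTop_add (tendsto_const_nhds (x := (1 : ℝ))))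
    simpa [Function.comp_def] using this
  exact squeeze_zero (Lam_nonneg hα0) (Lam_le_rpow hα0 hα1.le) hpow

end Kernel

lemma Antitone.hasSum_sub_add {f : ℕ → ℝ} (hf : Antitone f) (hlim : Tendsto f atTop (𝓝 0))
    (k : ℕ) : HasSum (fun j => f j - f (j + k)) (∑ j ∈ range k, f j) := by
  rw [hasSum_iff_tendsto_nat_of_nonneg fun j => sub_nonneg.2 (hf (Nat.le_add_right j k))]
  have hpartial : ∀ N, ∑ j ∈ range N, (f j - f (j + k)) =
      ∑ j ∈ range k, f j - ∑ j ∈ range k, f (N + j) := by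
    intro N
    have h₁ := sum_range_add f N k
    have h₂ := sum_range_add f k N
    rw [add_comm k N] at h₂
    simp only [sum_sub_distrib, add_comm _ k]
    linarith
  simp only [hpartial]
  have htail : Tendsto (fun N => ∑ j ∈ range k, f (N + j)) atTop (𝓝 0) := by
    simpa using tendsto_finsetSum (range k) fun j _ => hlim.comp (tendsto_add_atTop_nat j)
  simpa using tendsto_const_nhds.sub htail

lemma hasSum_Lam_sub_Lam_add {α : ℝ} (hα0 : 0 ≤ α) (hα1 : α < 1) (k : ℕ) :
    HasSum (fun j => Lam α j - Lam α (j + k)) (∑ j ∈ range k, Lam α j) :=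
  (Lam_antitone hα0 hα1.le).hasSum_sub_add (tendsto_Lam_atTop hα0 hα1) k

lemma tsum_mul_add_sub_tsum_mul {c w : ℕ → ℝ} {k : ℕ}
    (hc : HasSum (fun j => c j - c (j + k)) (∑ j ∈ range k, c j))
    (hshift : Summable fun j => c j * w (j + k)) (hbase : Summable fun j => c j * w j) :
    ∑' j, c j * w (j + k) - ∑' j, c j * w j =
      ∑' j, (c j - c (j + k)) * (w (j + k) - w k) - ∑ j ∈ range k, c j * (w j - w k) := by
  have htail : Summable fun j => c (j + k) * w (j + k) := (summable_nat_add_iff k).2 hbase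
  have hdiff : Summable fun j => (c j - c (j + k)) * (w (j + k) - w k) := by
    refine ((hshift.sub htail).sub (hc.summable.mul_right (w k))).congr fun j => ?_
    ring
  rw [← hbase.sum_add_tsum_nat_add k]
  have hsplit : ∑' j, c j * w (j + k) =
      ∑' j, (c j - c (j + k)) * (w (j + k) - w k) + (∑ j ∈ range k, c j) * w k +
        ∑' j, c (j + k) * w (j + k) := by
    rw [← (hc.mul_right (w k)).tsum_eq, ← hdiff.tsum_add (hc.mul_right (w k)).summable,
      ← (hdiff.add (hc.mul_right (w k)).summable).tsum_add htail]
    exact tsum_congr fun j => by ring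
  simp only [hsplit, sum_mul, mul_sub, sum_sub_distrib]
  ring

section PowerSums

variable {p : ℝ}

lemma rpow_sub_one_mul_sub_le {a b : ℝ} (hp0 : p ≠ 0) (hp1 : p ≤ 1) (ha : 0 < a)
    (hab : a < b) : b ^ (p - 1) * (b - a) ≤ (b ^ p - a ^ p) / p := by
  obtain ⟨c, ⟨hac, hcb⟩, hc⟩ := exists_hasDerivAt_eq_slope (fun x => x ^ p)
    (fun x => p * x ^ (p - 1)) hab
    (fun x hx => (Real.continuousAt_rpow_const x p
      (Or.inl (ha.trans_le hx.1).ne')).continuousWithinAt)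
    (fun x hx => Real.hasDerivAt_rpow_const (Or.inl (ha.trans hx.1).ne'))
  have hslope : (b ^ p - a ^ p) / p = c ^ (p - 1) * (b - a) := by
    rw [eq_div_iff (sub_pos.2 hab).ne'] at hc
    rw [div_eq_iff hp0, ← hc]
    ring
  rw [hslope]
  exact mul_le_mul_of_nonneg_right
    (Real.rpow_le_rpow_of_nonpos (ha.trans hac) hcb.le (by linarith)) (sub_pos.2 hab).le

lemma sum_range_rpow_le (hp0 : 0 < p) (hp1 : p ≤ 1) (N : ℕ) :
    ∑ j ∈ range N, ((j : ℝ) + 1) ^ (p - 1) ≤ (N : ℝ) ^ p / p := by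
  induction N with
  | zero => simp [Real.zero_rpow hp0.ne']
  | succ N ih =>
    rw [sum_range_succ, Nat.cast_succ]
    suffices ((N : ℝ) + 1) ^ (p - 1) ≤ (((N : ℝ) + 1) ^ p - (N : ℝ) ^ p) / p by
      rw [sub_div] at this
      linarith
    rcases N.eq_zero_or_pos with rfl | hN
    · simpa [Real.zero_rpow hp0.ne'] using one_le_one_div hp0 hp1
    · simpa using rpow_sub_one_mul_sub_le hp0.ne' hp1 (Nat.cast_pos.2 hN) (lt_add_one (N : ℝ))

lemma summable_rpow_nat_add (hp : p < -1) (N : ℕ) :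
    Summable fun j : ℕ => ((j : ℝ) + N + 1) ^ p := by
  refine (summable_nat_add_iff (N + 1)).2 (Real.summable_nat_rpow.2 hp) |>.congr fun j => ?_
  push_cast
  ring_nf

lemma tsum_rpow_nat_add_le (hp : p < 1) {N : ℕ} (hN : 0 < N) :
    ∑' j : ℕ, ((j : ℝ) + N + 1) ^ (p - 2) ≤ (N : ℝ) ^ (p - 1) / (1 - p) := by
  have htelescope : HasSum
      (fun j : ℕ => (((j : ℝ) + N) ^ (p - 1) - ((j : ℝ) + N + 1) ^ (p - 1)) / (1 - p))
      ((N : ℝ) ^ (p - 1) / (1 - p)) := by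
    have hanti : Antitone fun j : ℕ => ((j : ℝ) + N) ^ (p - 1) := fun i j hij =>
      Real.rpow_le_rpow_of_nonpos (by positivity) (by gcongr) (by linarith)
    have hlim : Tendsto (fun j : ℕ => ((j : ℝ) + N) ^ (p - 1)) atTop (𝓝 0) := by
      have := (tendsto_rpow_neg_atTop (by linarith : 0 < 1 - p)).comp
        (tendsto_natCast_atTop_atTop.atTop_add (tendsto_const_nhds (x := (N : ℝ))))
      simpa [Function.comp_def] using this
    have := (hanti.hasSum_sub_add hlim 1).div_const (1 - p)
    rw [sum_range_one, Nat.cast_zero, zero_add] at this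
    refine this.congr_fun fun j => ?_
    push_cast
    ring_nf
  refine hasSum_le (fun j => ?_) (summable_rpow_nat_add (by linarith) N).hasSum htelescope
  have hmvt := rpow_sub_one_mul_sub_le (by linarith : p - 1 ≠ 0) (by linarith)
    (by positivity : (0 : ℝ) < j + N) (lt_add_one ((j : ℝ) + N))
  rw [show p - 1 - 1 = p - 2 by ring, add_sub_cancel_left, mul_one] at hmvt
  rwa [← neg_div_neg_eq, neg_sub, neg_sub] at hmvt

end PowerSums

lemma summable_Lam_mul {α : ℝ} (hα0 : 0 ≤ α) (hα1 : α ≤ 1) {v : ℕ → ℝ}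
    (hv : Summable fun m : ℕ => |v m| / (1 + (m : ℝ)) ^ (1 - α)) :
    Summable fun j => Lam α j * v j := by
  refine hv.of_norm_bounded fun j => ?_
  rw [Real.norm_eq_abs, abs_mul, abs_of_nonneg (Lam_nonneg hα0 j), div_eq_mul_inv,
    ← Real.rpow_neg (by positivity), neg_sub, add_comm 1, mul_comm]
  exact mul_le_mul_of_nonneg_left (Lam_le_rpow hα0 hα1 j) (abs_nonneg _)

section Estimates

variable {α β K : ℝ} {w : ℕ → ℝ} {k : ℕ}

lemma nonneg_of_abs_sub_le_rpow (hw : ∀ j, |w j - w k| ≤ K * |(j : ℝ) - k| ^ β) :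
    0 ≤ K := by
  simpa using (abs_nonneg _).trans (hw (k + 1))

lemma abs_sum_range_Lam_mul_sub_le (hα0 : 0 < α) (hα1 : α ≤ 1) (hβ : 0 ≤ β)
    (hw : ∀ j, |w j - w k| ≤ K * |(j : ℝ) - k| ^ β) :
    |∑ j ∈ range k, Lam α j * (w j - w k)| ≤ K / α * (k : ℝ) ^ (β + α) := by
  have hK := nonneg_of_abs_sub_le_rpow hw
  have hterm : ∀ j ∈ range k,
      |Lam α j * (w j - w k)| ≤ K * (k : ℝ) ^ β * ((j : ℝ) + 1) ^ (α - 1) := by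
    intro j hj
    have hjk : |(j : ℝ) - k| ≤ k := by
      rw [abs_sub_comm, abs_of_nonneg (by simp [(mem_range.1 hj).le])]
      linarith [(j.cast_nonneg : (0 : ℝ) ≤ j)]
    rw [abs_mul, abs_of_nonneg (Lam_nonneg hα0.le j), mul_comm]
    exact mul_le_mul ((hw j).trans (by gcongr)) (Lam_le_rpow hα0.le hα1 j)
      (Lam_nonneg hα0.le j) (by positivity)
  calc |∑ j ∈ range k, Lam α j * (w j - w k)|
      ≤ ∑ j ∈ range k, K * (k : ℝ) ^ β * ((j : ℝ) + 1) ^ (α - 1) :=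
        (abs_sum_le_sum_abs _ _).trans (sum_le_sum hterm)
    _ ≤ K * (k : ℝ) ^ β * ((k : ℝ) ^ α / α) := by
        rw [← mul_sum]
        gcongr
        exact sum_range_rpow_le hα0 hα1 k
    _ = K / α * (k : ℝ) ^ (β + α) := by
        rw [Real.rpow_add' k.cast_nonneg (by positivity)]
        ring

lemma abs_Lam_sub_mul_sub_le (hα0 : 0 < α) (hα1 : α ≤ 1) (hβ : 0 ≤ β)
    (hw : ∀ j, |w j - w k| ≤ K * |(j : ℝ) - k| ^ β) (j : ℕ) :
    |(Lam α j - Lam α (j + k)) * (w (j + k) - w k)| ≤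
      (Lam α j - Lam α (j + k)) * (K * ((j : ℝ) + 1) ^ β) := by
  have hmono : 0 ≤ Lam α j - Lam α (j + k) :=
    sub_nonneg.2 (Lam_antitone hα0.le hα1 (Nat.le_add_right j k))
  rw [abs_mul, abs_of_nonneg hmono]
  refine mul_le_mul_of_nonneg_left ((hw (j + k)).trans ?_) hmono
  have hK := nonneg_of_abs_sub_le_rpow hw
  push_cast
  rw [add_sub_cancel_right, abs_of_nonneg j.cast_nonneg]
  gcongr
  linarith

lemma abs_tsum_Lam_sub_mul_sub_le (hα0 : 0 < α) (hβ : 0 ≤ β) (hβα : β + α < 1)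
    (hk : 0 < k) (hw : ∀ j, |w j - w k| ≤ K * |(j : ℝ) - k| ^ β) :
    |∑' j, (Lam α j - Lam α (j + k)) * (w (j + k) - w k)| ≤
      K * (1 / (β + α) + 1 / (1 - (β + α))) * (k : ℝ) ^ (β + α) := by
  have hα1 : α ≤ 1 := by linarith
  have hK := nonneg_of_abs_sub_le_rpow hw
  set f := fun j => (Lam α j - Lam α (j + k)) * (w (j + k) - w k)
  have hnear : ∀ j : ℕ, |f j| ≤ K * ((j : ℝ) + 1) ^ (β + α - 1) := by
    intro j
    refine (abs_Lam_sub_mul_sub_le hα0 hα1 hβ hw j).trans ?_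
    calc (Lam α j - Lam α (j + k)) * (K * ((j : ℝ) + 1) ^ β)
        ≤ ((j : ℝ) + 1) ^ (α - 1) * (K * ((j : ℝ) + 1) ^ β) := by
          gcongr
          linarith [Lam_le_rpow hα0.le hα1 j, Lam_nonneg hα0.le (j + k)]
      _ = K * ((j : ℝ) + 1) ^ (β + α - 1) := by
          rw [mul_left_comm, ← Real.rpow_add (by positivity)]
          ring_nf
  have hfar : ∀ j : ℕ, |f j| ≤ k * K * ((j : ℝ) + 1) ^ (β + α - 2) := by
    intro j
    refine (abs_Lam_sub_mul_sub_le hα0 hα1 hβ hw j).trans ?_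
    calc (Lam α j - Lam α (j + k)) * (K * ((j : ℝ) + 1) ^ β)
        ≤ (k * ((j : ℝ) + 1) ^ (α - 2)) * (K * ((j : ℝ) + 1) ^ β) := by
          gcongr
          exact Lam_sub_Lam_add_le hα0.le hα1 j k
      _ = k * K * ((j : ℝ) + 1) ^ (β + α - 2) := by
          rw [mul_mul_mul_comm, ← Real.rpow_add (by positivity)]
          ring_nf
  have habs : Summable fun j => |f j| := by
    refine Summable.of_nonneg_of_le (fun j => abs_nonneg _) hfar (Summable.mul_left _ ?_)
    simpa using summable_rpow_nat_add (by linarith : β + α - 2 < -1) 0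
  have htail : ∑' j, |f (j + k)| ≤ k * K * ((k : ℝ) ^ (β + α - 1) / (1 - (β + α))) := by
    calc ∑' j, |f (j + k)| ≤ ∑' j : ℕ, k * K * ((j : ℝ) + k + 1) ^ (β + α - 2) := by
          refine ((summable_nat_add_iff k).2 habs).tsum_le_tsum
            (fun j => (hfar (j + k)).trans_eq ?_)
            ((summable_rpow_nat_add (by linarith) k).mul_left _)
          push_cast
          ring_nf
      _ ≤ _ := by
          rw [tsum_mul_left]
          gcongr
          exact tsum_rpow_nat_add_le hβα hk
  have habs' : Summable fun j => ‖f j‖ := by simpa only [Real.norm_eq_abs] using habs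
  calc |∑' j, f j| ≤ ∑' j, |f j| := by
          simpa only [Real.norm_eq_abs] using norm_tsum_le_tsum_norm habs'
    _ = ∑ j ∈ range k, |f j| + ∑' j, |f (j + k)| := (habs.sum_add_tsum_nat_add k).symm
    _ ≤ K * ((k : ℝ) ^ (β + α) / (β + α)) +
          k * K * ((k : ℝ) ^ (β + α - 1) / (1 - (β + α))) := by
        gcongr
        calc ∑ j ∈ range k, |f j| ≤ ∑ j ∈ range k, K * ((j : ℝ) + 1) ^ (β + α - 1) :=
              sum_le_sum fun j _ => hnear j
          _ ≤ _ := by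
              rw [← mul_sum]
              gcongr
              exact sum_range_rpow_le (by positivity) hβα.le k
    _ = K * (1 / (β + α) + 1 / (1 - (β + α))) * (k : ℝ) ^ (β + α) := by
        rw [Real.rpow_sub_one (by positivity)]
        field_simp

lemma abs_tsum_Lam_mul_add_sub_le (hα0 : 0 < α) (hβ : 0 ≤ β) (hβα : β + α < 1)
    (hk : 0 < k) (hw : ∀ j, |w j - w k| ≤ K * |(j : ℝ) - k| ^ β)
    (hshift : Summable fun j => Lam α j * w (j + k)) (hbase : Summable fun j => Lam α j * w j) :
    |∑' j, Lam α j * w (j + k) - ∑' j, Lam α j * w j| ≤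
      (1 / α + 1 / (β + α) + 1 / (1 - (β + α))) * K * (k : ℝ) ^ (β + α) := by
  rw [tsum_mul_add_sub_tsum_mul (hasSum_Lam_sub_Lam_add hα0.le (by linarith) k) hshift hbase]
  refine (abs_sub _ _).trans ?_
  calc _ ≤ K * (1 / (β + α) + 1 / (1 - (β + α))) * (k : ℝ) ^ (β + α) +
          K / α * (k : ℝ) ^ (β + α) :=
        add_le_add (abs_tsum_Lam_sub_mul_sub_le hα0 hβ hβα hk hw)
          (abs_sum_range_Lam_mul_sub_le hα0 (by linarith) hβ hw)
    _ = _ := by ring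

end Estimates

/-- Here `u n` is the value of `u` at `nh ∈ ℤ_h`, `M` bounds `sup |u|` and `K` the `C_h^{0,β}`
seminorm, so `M + K` is `‖u‖_{C_h^{0,β}}`. -/
theorem discrete_schauder_estimate_general (α β : ℝ) (h0α : 0 < α)
    (h0β : 0 < β) (hαβ : α + β < 1) :
    ∃ C > 0, ∀ (h : ℝ), 0 < h → ∀ (u : ℤ → ℝ) (M K : ℝ),
      (∀ n : ℤ, Summable (fun m : ℕ => |u (n + m)| / (1 + (m : ℝ)) ^ (1 - α)) ∧
        Summable (fun m : ℕ => |u (n - m)| / (1 + (m : ℝ)) ^ (1 - α))) →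
      (∀ m : ℤ, |u m| ≤ M) →
      (∀ m j : ℤ, m ≠ j → |u j - u m| ≤ K * h ^ β * |(j : ℝ) - m| ^ β) →
      ∀ n l : ℤ, n ≠ l →
        |(h ^ α * ∑' j : ℕ, Lam α j * u (n + j)) -
            (h ^ α * ∑' j : ℕ, Lam α j * u (l + j))| ≤
          C * (M + K) * h ^ (β + α) * |(n : ℝ) - l| ^ (β + α) := by
  have hβα : β + α < 1 := by linarith
  set C := 1 / α + 1 / (β + α) + 1 / (1 - (β + α))
  have hC : 0 < C := by
    have := sub_pos.2 hβα
    positivity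
  refine ⟨C, hC, fun h hh u M K hsum hM hK n l hnl => ?_⟩
  wlog hln : l < n generalizing n l
  · rw [abs_sub_comm, abs_sub_comm (n : ℝ)]
    exact this l n hnl.symm (lt_of_le_of_ne (not_lt.1 hln) hnl)
  obtain ⟨k, rfl⟩ : ∃ k : ℕ, n = l + k := ⟨(n - l).toNat, by omega⟩
  have hw : ∀ j : ℕ, |u (l + j) - u (l + k)| ≤ K * h ^ β * |(j : ℝ) - k| ^ β := by
    intro j
    rcases eq_or_ne j k with rfl | hjk
    · simp [Real.zero_rpow h0β.ne']
    · simpa using hK (l + k) (l + j) (by omega)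
  have hshift : Summable fun j : ℕ => Lam α j * u (l + ↑(j + k)) := by
    refine (summable_Lam_mul h0α.le (by linarith) (hsum (l + k)).1).congr fun j => ?_
    push_cast
    ring_nf
  have key := abs_tsum_Lam_mul_add_sub_le h0α h0β.le hβα (by omega) hw hshift
    (summable_Lam_mul h0α.le (by linarith) (hsum l).1)
  have hM0 : 0 ≤ M := (abs_nonneg _).trans (hM 0)
  calc _ = h ^ α *
        |∑' j : ℕ, Lam α j * u (l + ↑(j + k)) - ∑' j : ℕ, Lam α j * u (l + j)| := by
        rw [← mul_sub, abs_mul, abs_of_pos (by positivity)]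
        push_cast
        ring_nf
    _ ≤ h ^ α * (C * (K * h ^ β) * (k : ℝ) ^ (β + α)) := by
        gcongr
    _ = C * K * h ^ (β + α) * |((l + k : ℤ) : ℝ) - l| ^ (β + α) := by
        rw [Real.rpow_add hh]
        push_cast
        rw [add_sub_cancel_left, abs_of_nonneg k.cast_nonneg]
        ring
    _ ≤ _ := by
        gcongr
        linarith

/-- Discrete Schauder estimate (gain of regularity): for `0 < α, β < 1` with `α + β < 1`,
if `u ∈ ℓ_{-α,h} ∩ C_h^{0,β}` then `(δ_right)^{-α}u ∈ C_h^{0,β+α}` with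
`[(δ_right)^{-α}u]_{C_h^{0,β+α}} ≤ C ‖u‖_{C_h^{0,β}}`, `C` independent of `h` and `u`.
Here `u n` is the value of `u` at `nh ∈ ℤ_h`, `M` bounds `sup |u|` and `K` the `C_h^{0,β}`
seminorm, so `M + K` is `‖u‖_{C_h^{0,β}}`. -/
theorem discrete_schauder_estimate (α β : ℝ) (h0α : 0 < α) (h1α : α < 1)
    (h0β : 0 < β) (h1β : β < 1) (hαβ : α + β < 1) :
    ∃ C > 0, ∀ (h : ℝ), 0 < h → ∀ (u : ℤ → ℝ) (M K : ℝ),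
      (∀ n : ℤ, Summable (fun m : ℕ => |u (n + m)| / (1 + (m : ℝ)) ^ (1 - α)) ∧
        Summable (fun m : ℕ => |u (n - m)| / (1 + (m : ℝ)) ^ (1 - α))) →
      (∀ m : ℤ, |u m| ≤ M) →
      (∀ m j : ℤ, m ≠ j → |u j - u m| ≤ K * h ^ β * |(j : ℝ) - m| ^ β) →
      ∀ n l : ℤ, n ≠ l →
        |(h ^ α * ∑' j : ℕ, Lam α j * u (n + j)) -
            (h ^ α * ∑' j : ℕ, Lam α j * u (l + j))| ≤
          C * (M + K) * h ^ (β + α) * |(n : ℝ) - l| ^ (β + α) :=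
  discrete_schauder_estimate_general α β h0α h0β hαβ
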